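/- arXiv:2006.15609 — 3 statements merged into one kernel-verified Lean document; each statement's English description precedes it below -/
import Mathlib

section
/- If the attachment function satisfies limsup_{i→∞} f(i)/i < f_* := inf_{i≥1} f(i), and λ* is the Malthusian parameter (the unique λ > 0 with ∑_{k=1}^∞ ∏_{i=1}^k f(i)/(λ+f(i)) = 1), then limsup_{i→∞} f(i)/i < λ*. -/
open Finset

/-!
Every factor `f i / (λ + f i)` is at least `r := f_* / (λ + f_*)`, so the Malthusian series
dominates the geometric series `∑_{k ≥ 1} r ^ k = f_* / λ`. Since the series equals `1` at `λ*`,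
this forces `f_* ≤ λ*`, and the hypothesis `limsup f(i)/i < f_*` finishes the proof.
-/

noncomputable def malthusSum (f : ℕ → ℝ) (lam : ℝ) : ℝ :=
  ∑' k : ℕ, ∏ i ∈ Icc 1 (k + 1), f i / (lam + f i)

lemma div_add_le_div_add {lam c x : ℝ} (hlam : 0 ≤ lam) (hc : 0 < c) (hcx : c ≤ x) :
    c / (lam + c) ≤ x / (lam + x) := by
  rw [div_le_div_iff₀ (by linarith) (by linarith)]
  nlinarith

lemma tsum_pow_succ_of_lt_one {r : ℝ} (h₀ : 0 ≤ r) (h₁ : r < 1) :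
    ∑' k : ℕ, r ^ (k + 1) = r / (1 - r) := by
  simp_rw [pow_succ']
  rw [tsum_mul_left, tsum_geometric_of_lt_one h₀ h₁, div_eq_mul_inv]

lemma summable_pow_succ_of_lt_one {r : ℝ} (h₀ : 0 ≤ r) (h₁ : r < 1) :
    Summable fun k : ℕ => r ^ (k + 1) := by
  simp_rw [pow_succ']
  exact (summable_geometric_of_lt_one h₀ h₁).mul_left r

section LowerBound

variable {f : ℕ → ℝ} {lam c : ℝ}

lemma pow_le_prod_Icc_div_add (hlam : 0 ≤ lam) (hc : 0 < c) (hf : ∀ i, 1 ≤ i → c ≤ f i)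
    (n : ℕ) : (c / (lam + c)) ^ n ≤ ∏ i ∈ Icc 1 n, f i / (lam + f i) := by
  calc (c / (lam + c)) ^ n = ∏ _i ∈ Icc 1 n, c / (lam + c) := by
        rw [prod_const, Nat.card_Icc, Nat.add_sub_cancel]
    _ ≤ ∏ i ∈ Icc 1 n, f i / (lam + f i) := by
      refine prod_le_prod (fun _ _ => by positivity) fun i hi => ?_
      exact div_add_le_div_add hlam hc (hf i (mem_Icc.1 hi).1)

lemma div_le_malthusSum (hlam : 0 < lam) (hc : 0 < c) (hf : ∀ i, 1 ≤ i → c ≤ f i)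
    (hs : Summable fun k : ℕ => ∏ i ∈ Icc 1 (k + 1), f i / (lam + f i)) :
    c / lam ≤ malthusSum f lam := by
  have hr₁ : c / (lam + c) < 1 := (div_lt_one (by positivity)).2 (by linarith)
  have hr₀ : 0 ≤ c / (lam + c) := by positivity
  calc c / lam = ∑' k : ℕ, (c / (lam + c)) ^ (k + 1) := by
        rw [tsum_pow_succ_of_lt_one hr₀ hr₁, one_sub_div (by positivity), add_sub_cancel_right,
          div_div_div_cancel_right₀ (by positivity)]
    _ ≤ malthusSum f lam :=
      (summable_pow_succ_of_lt_one hr₀ hr₁).tsum_le_tsum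
        (fun k => pow_le_prod_Icc_div_add hlam.le hc hf (k + 1)) hs

lemma le_of_malthusSum_eq_one (hlam : 0 < lam) (hf : ∀ i, 1 ≤ i → c ≤ f i)
    (h : malthusSum f lam = 1) : c ≤ lam := by
  rcases le_or_gt c 0 with hc | hc
  · linarith
  have hs : Summable fun k : ℕ => ∏ i ∈ Icc 1 (k + 1), f i / (lam + f i) := by
    by_contra hns
    rw [malthusSum, tsum_eq_zero_of_not_summable hns] at h
    exact zero_ne_one h
  have := div_le_malthusSum hlam hc hf hs
  rwa [h, div_le_one hlam] at this

end LowerBound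

theorem limsup_lt_malthusian_general (f : ℕ → ℝ) (hfpos : ∀ i : ℕ, 1 ≤ i → 0 < f i)
    (fstar : ℝ) (hfstar : fstar = ⨅ i : {i : ℕ // 1 ≤ i}, f i)
    (hlimsup : Filter.limsup (fun i : ℕ => f i / (i : ℝ)) Filter.atTop < fstar)
    (lam : ℝ) (hlam : 0 < lam)
    (hMalthus : ∑' k : ℕ, ∏ i ∈ Finset.Icc 1 (k + 1), f i / (lam + f i) = 1) :
    Filter.limsup (fun i : ℕ => f i / (i : ℝ)) Filter.atTop < lam := by
  have hbdd : BddBelow (Set.range fun i : {i : ℕ // 1 ≤ i} => f i) :=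
    ⟨0, by rintro _ ⟨i, rfl⟩; exact (hfpos i i.2).le⟩
  have hfstar_le : ∀ i, 1 ≤ i → fstar ≤ f i := fun i hi => hfstar ▸ ciInf_le hbdd ⟨i, hi⟩
  exact hlimsup.trans_le (le_of_malthusSum_eq_one hlam hfstar_le hMalthus)

/-- If `limsup_{i→∞} f(i)/i < f_* := inf_{i≥1} f(i)` and `λ*` is the Malthusian parameter
(the unique `λ > 0` with `∑_{k=1}^∞ ∏_{i=1}^k f(i)/(λ+f(i)) = 1`), then
`limsup_{i→∞} f(i)/i < λ*`. -/
theorem limsup_lt_malthusian (f : ℕ → ℝ) (hfpos : ∀ i : ℕ, 1 ≤ i → 0 < f i)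
    (fstar : ℝ) (hfstar : fstar = ⨅ i : {i : ℕ // 1 ≤ i}, f i)
    (hlimsup : Filter.limsup (fun i : ℕ => f i / (i : ℝ)) Filter.atTop < fstar)
    (lam : ℝ) (hlam : 0 < lam)
    (hMalthus : ∑' k : ℕ, ∏ i ∈ Finset.Icc 1 (k + 1), f i / (lam + f i) = 1)
    (hUnique : ∀ lam' : ℝ, 0 < lam' →
      (∑' k : ℕ, ∏ i ∈ Finset.Icc 1 (k + 1), f i / (lam' + f i) = 1) → lam' = lam) :
    Filter.limsup (fun i : ℕ => f i / (i : ℝ)) Filter.atTop < lam :=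
  limsup_lt_malthusian_general f hfpos fstar hfstar hlimsup lam hlam hMalthus
end

section
/- Tail sum bound: for μ > 1, let C_μ = e^{(μ-1)/μ}/(μ-1). Then for any integers k ≥ 1 and m ≥ 1, ∑_{i=m}^∞ 1/(kμ+i)^{k(μ-1)+1} ≤ (C_μ/k) · 1/(kμ+m)^{k(μ-1)}. -/
/-!
Since `z ↦ z ^ (-(p + 1))` is decreasing, the tail sum `∑ⱼ (a + j) ^ (-(p + 1))` is at most
`∫_{a-1}^∞ z ^ (-(p + 1)) dz = (a - 1) ^ (-p) / p`, with `a = kμ + m` and `p = k(μ - 1)`.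
Shifting the base from `a - 1` back to `a` costs the factor `(a / (a - 1)) ^ p ≤ exp (p / (a - 1))`,
and `p / (a - 1) ≤ k(μ - 1) / (kμ) = (μ - 1) / μ`.
-/

open Real

open MeasureTheory Set Finset in
theorem sum_range_one_div_add_rpow_le {a p : ℝ} (ha : 1 < a) (hp : 0 < p) (n : ℕ) :
    ∑ i ∈ range n, 1 / (a + i) ^ (p + 1) ≤ (a - 1) ^ (-p) / p := by
  have ha₀ : 0 < a - 1 := by linarith
  have hexp : -(p + 1) < -1 := by linarith
  have hanti : AntitoneOn (fun z : ℝ ↦ z ^ (-(p + 1))) (Ici (a - 1)) := fun x hx _ _ hxy ↦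
    rpow_le_rpow_of_nonpos (ha₀.trans_le hx) hxy (by linarith)
  calc ∑ i ∈ range n, 1 / (a + i) ^ (p + 1)
      = ∑ i ∈ range n, (a - 1 + ↑(i + 1)) ^ (-(p + 1)) := by
        refine sum_congr rfl fun i _ ↦ ?_
        rw [rpow_neg (by positivity), one_div]
        push_cast
        ring_nf
    _ ≤ ∫ z in (a - 1)..(a - 1 + n), z ^ (-(p + 1)) :=
        (hanti.mono Icc_subset_Ici_self).sum_le_integral
    _ ≤ ∫ z in Ioi (a - 1), z ^ (-(p + 1)) := by
        rw [intervalIntegral.integral_of_le (by simp)]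
        exact setIntegral_mono_set (integrableOn_Ioi_rpow_of_lt hexp ha₀)
          (ae_restrict_of_forall_mem measurableSet_Ioi fun z hz ↦
            rpow_nonneg (ha₀.trans hz).le _)
          Ioc_subset_Ioi_self.eventuallyLE
    _ = (a - 1) ^ (-p) / p := by
        rw [integral_Ioi_rpow_of_lt hexp ha₀]
        ring_nf

theorem tsum_one_div_add_rpow_le {a p : ℝ} (ha : 1 < a) (hp : 0 < p) :
    ∑' j : ℕ, 1 / (a + j) ^ (p + 1) ≤ (a - 1) ^ (-p) / p :=
  Real.tsum_le_of_sum_range_le (fun j ↦ one_div_nonneg.2 (rpow_nonneg (by positivity) _))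
    (sum_range_one_div_add_rpow_le ha hp)

theorem sub_one_rpow_neg_le_exp_mul {a p : ℝ} (ha : 1 < a) (hp : 0 ≤ p) :
    (a - 1) ^ (-p) ≤ exp (p / (a - 1)) * a ^ (-p) := by
  have ha₀ : 0 < a - 1 := by linarith
  have hle : a ≤ (a - 1) * exp (1 / (a - 1)) := calc
    a = (a - 1) * (1 / (a - 1) + 1) := by field_simp; ring
    _ ≤ (a - 1) * exp (1 / (a - 1)) := by gcongr; exact add_one_le_exp _
  have hpow : a ^ p ≤ (a - 1) ^ p * exp (p / (a - 1)) := calc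
    a ^ p ≤ ((a - 1) * exp (1 / (a - 1))) ^ p := by gcongr
    _ = (a - 1) ^ p * exp (p / (a - 1)) := by
      rw [mul_rpow ha₀.le (exp_pos _).le, ← exp_mul, one_div_mul_eq_div]
  rw [rpow_neg ha₀.le, rpow_neg (by linarith), ← div_eq_mul_inv,
    inv_le_comm₀ (by positivity) (by positivity), inv_div, div_le_iff₀ (by positivity)]
  exact hpow

/-- Tail sum bound: for `μ > 1` and `C_μ = e^{(μ-1)/μ}/(μ-1)`, for any integers `k ≥ 1`
and `m ≥ 1`, `∑_{i=m}^∞ 1/(kμ+i)^{k(μ-1)+1} ≤ (C_μ/k) · 1/(kμ+m)^{k(μ-1)}`. -/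
theorem tail_sum_bound (μ : ℝ) (hμ : 1 < μ) (Cμ : ℝ)
    (hCμ : Cμ = Real.exp ((μ - 1) / μ) / (μ - 1)) :
    ∀ k m : ℕ, 1 ≤ k → 1 ≤ m →
      ∑' j : ℕ, 1 / ((k : ℝ) * μ + ((m : ℝ) + j)) ^ ((k : ℝ) * (μ - 1) + 1)
        ≤ (Cμ / k) * (1 / ((k : ℝ) * μ + m) ^ ((k : ℝ) * (μ - 1))) := by
  intro k m hk hm
  have hk' : (1 : ℝ) ≤ k := by exact_mod_cast hk
  have hm' : (1 : ℝ) ≤ m := by exact_mod_cast hm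
  have hkμ : 1 < (k : ℝ) * μ := by nlinarith
  simp_rw [← add_assoc]
  set a := (k : ℝ) * μ + m with ha_def
  set p := (k : ℝ) * (μ - 1) with hp_def
  have ha : 1 < a := by linarith
  have hp : 0 < p := by positivity
  have hp_div : p / (a - 1) ≤ (μ - 1) / μ := by
    rw [div_le_div_iff₀ (by linarith) (by linarith)]
    nlinarith
  calc ∑' j : ℕ, 1 / (a + j) ^ (p + 1)
      ≤ (a - 1) ^ (-p) / p := tsum_one_div_add_rpow_le ha hp
    _ ≤ exp (p / (a - 1)) * a ^ (-p) / p := by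
        gcongr
        exact sub_one_rpow_neg_le_exp_mul ha hp.le
    _ ≤ exp ((μ - 1) / μ) * a ^ (-p) / p := by gcongr
    _ = (Cμ / k) * (1 / a ^ p) := by
        rw [hCμ, rpow_neg (by linarith), hp_def]
        field_simp
end

section
/- Leaf probability lower bound: consider the random tree process where at step n a new vertex attaches to an existing vertex v with probability proportional to f(deg v), started from two vertices v₁, v₂ joined by an edge. Let C > 0 and β ≥ 0, and suppose the total weight satisfies ∑_{j} f(deg(v_j)) ≥ (2C+β)(n−1) − C in any tree on n vertices. Then there exists a constant C₀ > 0 such that for all K ≥ 2, the probability A_K that v₁ remains a leaf in T_f(K) satisfies P(A_K) ≥ C₀ / K^{f(1)/(2C+β)}. -/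
open MeasureTheory Finset Real

/-- Degree of vertex `j` in the tree on vertices `{1, …, n}` (with `n ≥ 2`) built from
parent choices `p` (vertex `m` attaches to `p m` for `3 ≤ m ≤ n`, and vertices `1, 2`
are joined by an edge): every vertex has one edge towards the "older" part of the tree,
plus one edge for each child. -/
def treeDeg (p : ℕ → ℕ) (n j : ℕ) : ℕ :=
  1 + ((Finset.Icc 3 n).filter (fun m => p m = j)).card

noncomputable instance : DecidableEq (ℕ → ℕ) := Classical.decEq _

section LPBaux



/-- Set of canonical parent functions with choices in `[lo, m-1]`. -/
noncomputable def PP (lo : ℕ) : ℕ → Finset (ℕ → ℕ)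
  | 0 => {fun _ => 0}
  | 1 => {fun _ => 0}
  | 2 => {fun _ => 0}
  | (K+3) => ((PP lo (K+2)) ×ˢ Finset.Icc lo (K+2)).image
      fun x => Function.update x.1 (K+3) x.2

noncomputable def Sw (f : ℕ → ℝ) (p : ℕ → ℕ) (m : ℕ) : ℝ :=
  ∑ j ∈ Finset.Icc 1 m, f (treeDeg p m j)

noncomputable def Wt (f : ℕ → ℝ) (p : ℕ → ℕ) (K : ℕ) : ℝ :=
  ∏ n ∈ Finset.Icc 3 K, f (treeDeg p (n-1) (p n)) / Sw f p (n-1)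

lemma treeDeg_congr {p q : ℕ → ℕ} {n : ℕ} (h : ∀ m, 3 ≤ m → m ≤ n → p m = q m) (j : ℕ) :
    treeDeg p n j = treeDeg q n j := by
  unfold treeDeg
  congr 1
  apply Finset.card_bij (fun m _ => m) ?_ (fun a b _ _ h => h) (fun b hb => ⟨b, ?_, rfl⟩)
  · intro a ha
    simp only [Finset.mem_filter, Finset.mem_Icc] at ha ⊢
    exact ⟨ha.1, by rw [← h a ha.1.1 ha.1.2]; exact ha.2⟩
  · simp only [Finset.mem_filter, Finset.mem_Icc] at hb ⊢
    exact ⟨hb.1, by rw [h b hb.1.1 hb.1.2]; exact hb.2⟩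

lemma one_le_treeDeg (p : ℕ → ℕ) (n j : ℕ) : 1 ≤ treeDeg p n j := Nat.le_add_right 1 _

lemma sum_treeDeg {p : ℕ → ℕ} {K : ℕ} (hK : 2 ≤ K)
    (hp : ∀ m, 3 ≤ m → m ≤ K → 1 ≤ p m ∧ p m ≤ m - 1) :
    ∑ j ∈ Finset.Icc 1 K, treeDeg p K j = 2 * (K - 1) := by
  unfold treeDeg
  rw [Finset.sum_add_distrib, Finset.sum_const, smul_eq_mul, mul_one]
  have hcard : ∑ j ∈ Finset.Icc 1 K, ((Finset.Icc 3 K).filter (fun m => p m = j)).card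
      = (Finset.Icc 3 K).card := by
    rw [← Finset.card_eq_sum_card_fiberwise]
    intro m hm
    simp only [Finset.mem_coe, Finset.mem_Icc] at hm ⊢
    have h := hp m hm.1 hm.2
    exact ⟨h.1, h.2.trans (Nat.le_trans (Nat.sub_le m 1) hm.2)⟩
  rw [hcard, Nat.card_Icc, Nat.card_Icc]
  omega

lemma mem_PP {lo : ℕ} (K : ℕ) (p : ℕ → ℕ) :
    p ∈ PP lo K ↔ ((∀ m, 3 ≤ m → m ≤ K → lo ≤ p m ∧ p m ≤ m - 1) ∧
      ∀ m, ¬(3 ≤ m ∧ m ≤ K) → p m = 0) := by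
  induction K using Nat.strong_induction_on generalizing p with
  | _ K ih =>
    match K with
    | 0 | 1 | 2 =>
      simp only [PP, Finset.mem_singleton]
      constructor
      · rintro rfl; exact ⟨fun m h1 h2 => by omega, fun m _ => rfl⟩
      · rintro ⟨-, h2⟩; funext m; exact h2 m (by omega)
    | (K+3) =>
      simp only [PP, Finset.mem_image, Finset.mem_product, Finset.mem_Icc]
      constructor
      · rintro ⟨⟨q, j⟩, ⟨hq, hj⟩, rfl⟩
        rw [ih (K+2) (by omega)] at hq
        constructor
        · intro m h1 h2
          rcases eq_or_ne m (K+3) with rfl | hm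
          · rw [Function.update_self]; exact ⟨hj.1, by omega⟩
          · rw [Function.update_of_ne hm]; exact hq.1 m h1 (by omega)
        · intro m hm
          rw [Function.update_of_ne (by omega)]
          exact hq.2 m (by omega)
      · rintro ⟨h1, h2⟩
        refine ⟨⟨Function.update p (K+3) 0, p (K+3)⟩, ⟨?_, ?_⟩, ?_⟩
        all_goals dsimp only
        · rw [ih (K+2) (by omega)]
          constructor
          · intro m hm1 hm2
            rw [Function.update_of_ne (by omega)]
            exact h1 m hm1 (by omega)
          · intro m hm
            rcases eq_or_ne m (K+3) with rfl | hne
            · exact Function.update_self _ _ _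
            · rw [Function.update_of_ne hne]; exact h2 m (by omega)
        · have := h1 (K+3) (by omega) le_rfl; omega
        · funext m
          rcases eq_or_ne m (K+3) with rfl | hne
          · simp
          · rw [Function.update_of_ne hne, Function.update_of_ne hne]

lemma PP_nonempty {lo : ℕ} (hlo : lo ≤ 2) (K : ℕ) : (PP lo K).Nonempty := by
  refine ⟨fun m => if 3 ≤ m ∧ m ≤ K then lo else 0, (mem_PP K _).2 ⟨?_, ?_⟩⟩
  · intro m h1 h2
    rw [if_pos ⟨h1, h2⟩]
    omega
  · intro m hm
    rw [if_neg hm]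

lemma PP_subset {K : ℕ} : PP 2 K ⊆ PP 1 K := by
  intro p hp
  rw [mem_PP] at hp ⊢
  exact ⟨fun m h1 h2 => ⟨by have := (hp.1 m h1 h2).1; omega, (hp.1 m h1 h2).2⟩, hp.2⟩

/-- recursion for sums over PP -/
lemma sum_PP_succ {lo K : ℕ} (hK : 2 ≤ K) (g : (ℕ → ℕ) → ℝ) :
    ∑ p ∈ PP lo (K+1), g p
      = ∑ p ∈ PP lo K, ∑ j ∈ Finset.Icc lo K, g (Function.update p (K+1) j) := by
  obtain ⟨K', rfl⟩ : ∃ K', K = K' + 2 := ⟨K - 2, by omega⟩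
  show ∑ p ∈ PP lo (K'+3), g p = _
  rw [PP, Finset.sum_image, Finset.sum_product]
  rintro ⟨q1, j1⟩ h1 ⟨q2, j2⟩ h2 heq
  simp only [Finset.mem_coe, Finset.mem_product] at h1 h2
  have e1 : j1 = j2 := by
    have := congrFun heq (K'+3)
    simpa using this
  have e2 : q1 = q2 := by
    funext m
    rcases eq_or_ne m (K'+3) with rfl | hne
    · rw [((mem_PP _ _).1 h1.1).2 _ (by omega), ((mem_PP _ _).1 h2.1).2 _ (by omega)]
    · have := congrFun heq m
      beta_reduce at this
      rwa [Function.update_of_ne hne, Function.update_of_ne hne] at this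
  rw [e1, e2]

section Weights
variable (f : ℕ → ℝ)

lemma Sw_pos (hfpos : ∀ i : ℕ, 1 ≤ i → 0 < f i) {K : ℕ} (hK : 1 ≤ K) (p : ℕ → ℕ) :
    0 < Sw f p K :=
  Finset.sum_pos (fun j _ => hfpos _ (one_le_treeDeg p K j))
    ⟨1, Finset.mem_Icc.2 ⟨le_rfl, hK⟩⟩

lemma Sw_congr {p q : ℕ → ℕ} {n : ℕ} (h : ∀ m, 3 ≤ m → m ≤ n → p m = q m) :
    Sw f p n = Sw f q n :=
  Finset.sum_congr rfl fun j _ => by rw [treeDeg_congr h]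

lemma Wt_pos (hfpos : ∀ i : ℕ, 1 ≤ i → 0 < f i) (p : ℕ → ℕ) (K : ℕ) :
    0 < Wt f p K := by
  refine Finset.prod_pos fun n hn => div_pos (hfpos _ (one_le_treeDeg _ _ _)) ?_
  have hn3 : 3 ≤ n := (Finset.mem_Icc.1 hn).1
  exact Sw_pos f hfpos (by omega) p

lemma Wt_update {K : ℕ} (hK : 2 ≤ K) (p : ℕ → ℕ) (j : ℕ) :
    Wt f (Function.update p (K+1) j) (K+1)
      = Wt f p K * (f (treeDeg p K j) / Sw f p K) := by
  unfold Wt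
  rw [Finset.prod_Icc_succ_top (by omega : 3 ≤ K + 1)]
  have hupd : ∀ m, 3 ≤ m → m ≤ K → Function.update p (K+1) j m = p m :=
    fun m _ hm => Function.update_of_ne (by omega) _ _
  congr 1
  · refine Finset.prod_congr rfl fun n hn => ?_
    rw [Finset.mem_Icc] at hn
    have h1 : ∀ m, 3 ≤ m → m ≤ n - 1 → Function.update p (K+1) j m = p m :=
      fun m hm3 hm => hupd m hm3 (by omega)
    rw [treeDeg_congr h1, Sw_congr f h1, hupd n hn.1 hn.2]
  · have h1 : ∀ m, 3 ≤ m → m ≤ (K+1) - 1 → Function.update p (K+1) j m = p m :=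
      fun m hm3 hm => hupd m hm3 (by omega)
    rw [treeDeg_congr h1, Sw_congr f h1, Function.update_self]
    simp

lemma Z_one (hfpos : ∀ i : ℕ, 1 ≤ i → 0 < f i) :
    ∀ K : ℕ, 2 ≤ K → ∑ p ∈ PP 1 K, Wt f p K = 1 := by
  refine Nat.le_induction ?_ ?_
  · have : PP 1 2 = {fun _ => 0} := rfl
    rw [this, Finset.sum_singleton]
    unfold Wt
    rw [show Finset.Icc 3 2 = ∅ from rfl, Finset.prod_empty]
  · intro K hK ih
    rw [sum_PP_succ hK]
    have : ∀ p ∈ PP 1 K, ∑ j ∈ Finset.Icc 1 K, Wt f (Function.update p (K+1) j) (K+1)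
        = Wt f p K := by
      intro p _
      have hS : Sw f p K ≠ 0 := ne_of_gt (Sw_pos f hfpos (by omega) p)
      calc ∑ j ∈ Finset.Icc 1 K, Wt f (Function.update p (K+1) j) (K+1)
          = ∑ j ∈ Finset.Icc 1 K, Wt f p K * (f (treeDeg p K j) / Sw f p K) :=
            Finset.sum_congr rfl fun j _ => Wt_update f hK p j
        _ = Wt f p K * ((∑ j ∈ Finset.Icc 1 K, f (treeDeg p K j)) / Sw f p K) := by
            rw [Finset.sum_div, Finset.mul_sum]
        _ = Wt f p K := by
            rw [show (∑ j ∈ Finset.Icc 1 K, f (treeDeg p K j)) = Sw f p K from rfl,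
              div_self hS, mul_one]
    rw [Finset.sum_congr rfl this, ih]

noncomputable def QQ (K : ℕ) : ℝ := ∑ p ∈ PP 2 K, Wt f p K

lemma treeDeg_one_of_good {p : ℕ → ℕ} {K : ℕ} (hp : p ∈ PP 2 K) :
    treeDeg p K 1 = 1 := by
  unfold treeDeg
  have : (Finset.Icc 3 K).filter (fun m => p m = 1) = ∅ := by
    rw [Finset.filter_eq_empty_iff]
    intro m hm
    rw [Finset.mem_Icc] at hm
    have := ((mem_PP K p).1 hp).1 m hm.1 hm.2
    omega
  rw [this]
  rfl

lemma QQ_two : QQ f 2 = 1 := by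
  unfold QQ
  have : PP 2 2 = {fun _ => 0} := rfl
  rw [this, Finset.sum_singleton]
  unfold Wt
  rw [show Finset.Icc 3 2 = ∅ from rfl, Finset.prod_empty]

lemma QQ_succ {K : ℕ} (hK : 2 ≤ K) :
    QQ f (K+1) = ∑ p ∈ PP 2 K, Wt f p K * ((Sw f p K - f 1) / Sw f p K) := by
  unfold QQ
  rw [sum_PP_succ hK]
  refine Finset.sum_congr rfl fun p hp => ?_
  calc ∑ j ∈ Finset.Icc 2 K, Wt f (Function.update p (K+1) j) (K+1)
      = ∑ j ∈ Finset.Icc 2 K, Wt f p K * (f (treeDeg p K j) / Sw f p K) :=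
        Finset.sum_congr rfl fun j _ => Wt_update f hK p j
    _ = Wt f p K * ((∑ j ∈ Finset.Icc 2 K, f (treeDeg p K j)) / Sw f p K) := by
        rw [Finset.sum_div, Finset.mul_sum]
    _ = Wt f p K * ((Sw f p K - f 1) / Sw f p K) := by
        have hins : Finset.Icc 1 K = insert 1 (Finset.Icc 2 K) := by
          ext m
          simp only [Finset.mem_Icc, Finset.mem_insert]
          omega
        have : Sw f p K = f 1 + ∑ j ∈ Finset.Icc 2 K, f (treeDeg p K j) := by
          unfold Sw
          rw [hins, Finset.sum_insert (by simp), treeDeg_one_of_good hp]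
        rw [this]
        ring_nf

lemma QQ_pos (hfpos : ∀ i : ℕ, 1 ≤ i → 0 < f i) (K : ℕ) : 0 < QQ f K :=
  Finset.sum_pos (fun p _ => Wt_pos f hfpos p K) (PP_nonempty le_rfl K)

lemma QQ_le_one (hfpos : ∀ i : ℕ, 1 ≤ i → 0 < f i) {K : ℕ} (hK : 2 ≤ K) :
    QQ f K ≤ 1 := by
  rw [← Z_one f hfpos K hK]
  exact Finset.sum_le_sum_of_subset_of_nonneg PP_subset
    (fun p _ _ => le_of_lt (Wt_pos f hfpos p K))

end Weights


lemma key_ratio {a t : ℝ} (ha : 0 < a) (ht : 1 < t) :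
    ((t-1)/t) ^ a ≤ 1 - a/(t+a) := by
  have h0 : 0 < t := by linarith
  have hpos : 0 < (t-1)/t := div_pos (by linarith) h0
  have hlog : Real.log ((t-1)/t) ≤ -(1/t) := by
    have := Real.log_le_sub_one_of_pos hpos
    have he : (t-1)/t - 1 = -(1/t) := by field_simp; ring
    linarith [he ▸ this]
  have h1 : ((t-1)/t) ^ a = Real.exp (a * Real.log ((t-1)/t)) := by
    rw [Real.rpow_def_of_pos hpos a, mul_comm]
  have h2 : a * Real.log ((t-1)/t) ≤ -(a/t) := by
    have := mul_le_mul_of_nonneg_left hlog ha.le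
    calc a * Real.log ((t-1)/t) ≤ a * -(1/t) := this
      _ = -(a/t) := by ring
  have h3 : Real.exp (-(a/t)) ≤ 1/(1 + a/t) := by
    rw [Real.exp_neg, inv_eq_one_div]
    have hx : 0 < 1 + a/t := by positivity
    have := Real.add_one_le_exp (a/t)
    exact one_div_le_one_div_of_le hx (by linarith)
  have h4 : 1/(1 + a/t) = 1 - a/(t+a) := by
    have ht0 : t ≠ 0 := by positivity
    have hta : t + a ≠ 0 := by positivity
    field_simp
    ring
  calc ((t-1)/t) ^ a = Real.exp (a * Real.log ((t-1)/t)) := h1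
    _ ≤ Real.exp (-(a/t)) := Real.exp_le_exp.2 h2
    _ ≤ 1/(1 + a/t) := h3
    _ = 1 - a/(t+a) := h4

end LPBaux

/-- Leaf probability lower bound for the preferential attachment tree: if new vertex `n`
attaches to vertex `j` with probability `f(deg j)/∑ f(deg)`, and in any tree on `n`
vertices the total weight satisfies `∑_j f(deg v_j) ≥ (2C+β)(n−1) − C`, then there is
`C₀ > 0` so that for all `K ≥ 2` the probability that `v₁` remains a leaf in `T_f(K)`
is at least `C₀ / K^{f(1)/(2C+β)}`. -/
theorem leaf_probability_lower_bound {Ω : Type*} [MeasurableSpace Ω]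
    (μ : Measure Ω) [IsProbabilityMeasure μ]
    (f : ℕ → ℝ) (hfpos : ∀ i : ℕ, 1 ≤ i → 0 < f i)
    (C β : ℝ) (hC : 0 < C) (hβ : 0 ≤ β)
    (hweight : ∀ n : ℕ, 2 ≤ n → ∀ d : ℕ → ℕ,
      (∀ j : ℕ, 1 ≤ j → j ≤ n → 1 ≤ d j) →
      (∑ j ∈ Finset.Icc 1 n, d j = 2 * (n - 1)) →
      (2 * C + β) * ((n : ℝ) - 1) - C ≤ ∑ j ∈ Finset.Icc 1 n, f (d j))
    (parent : ℕ → Ω → ℕ)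
    (hsupp : ∀ ω, ∀ n : ℕ, 3 ≤ n → 1 ≤ parent n ω ∧ parent n ω ≤ n - 1)
    (hLaw : ∀ K : ℕ, 3 ≤ K → ∀ p : ℕ → ℕ,
      (∀ n : ℕ, 3 ≤ n → n ≤ K → 1 ≤ p n ∧ p n ≤ n - 1) →
      μ {ω | ∀ n : ℕ, 3 ≤ n → n ≤ K → parent n ω = p n}
        = ENNReal.ofReal (∏ n ∈ Finset.Icc 3 K,
            f (treeDeg p (n - 1) (p n))
              / ∑ j ∈ Finset.Icc 1 (n - 1), f (treeDeg p (n - 1) j))) :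
    ∃ C₀ : ℝ, 0 < C₀ ∧ ∀ K : ℕ, 2 ≤ K →
      ENNReal.ofReal (C₀ / (K : ℝ) ^ (f 1 / (2 * C + β)))
        ≤ μ {ω | ∀ n : ℕ, 3 ≤ n → n ≤ K → parent n ω ≠ 1} := by
  -- Basic positivity facts
  have hD : (0:ℝ) < 2*C + β := by linarith
  have hf1 : 0 < f 1 := hfpos 1 le_rfl
  -- μ-estimate: the leaf probability is at least `QQ f K`
  have hmu : ∀ K : ℕ, 2 ≤ K → ENNReal.ofReal (QQ f K)
      ≤ μ {ω | ∀ n : ℕ, 3 ≤ n → n ≤ K → parent n ω ≠ 1} := by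
    intro K hK
    rcases eq_or_lt_of_le hK with rfl | hK3'
    · have hset : {ω : Ω | ∀ n : ℕ, 3 ≤ n → n ≤ 2 → parent n ω ≠ 1} = Set.univ := by
        ext ω
        simp only [Set.mem_setOf_eq, Set.mem_univ, iff_true]
        intro n h3 h2
        omega
      rw [hset, measure_univ, QQ_two]
      simp
    · have hK3 : 3 ≤ K := hK3'
      set A := {ω : Ω | ∀ n : ℕ, 3 ≤ n → n ≤ K → parent n ω ≠ 1} with hAdef
      have hsub : Aᶜ ⊆ ⋃ p ∈ PP 1 K \ PP 2 K,
          {ω : Ω | ∀ n : ℕ, 3 ≤ n → n ≤ K → parent n ω = p n} := by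
        intro ω hω
        have hω' : ¬ ∀ n : ℕ, 3 ≤ n → n ≤ K → parent n ω ≠ 1 := hω
        push_neg at hω'
        obtain ⟨n₀, h3, hnK, h1⟩ := hω'
        classical
        have hpmem : (fun m => if 3 ≤ m ∧ m ≤ K then parent m ω else 0) ∈ PP 1 K := by
          refine (mem_PP K _).2 ⟨?_, ?_⟩
          · intro m hm3 hmK
            rw [if_pos (⟨hm3, hmK⟩ : 3 ≤ m ∧ m ≤ K)]
            exact hsupp ω m hm3
          · intro m hm
            rw [if_neg hm]
        have hpnot : (fun m => if 3 ≤ m ∧ m ≤ K then parent m ω else 0) ∉ PP 2 K := by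
          intro hmem
          have h2 := ((mem_PP K _).1 hmem).1 n₀ h3 hnK
          rw [if_pos (⟨h3, hnK⟩ : 3 ≤ n₀ ∧ n₀ ≤ K), h1] at h2
          omega
        simp only [Set.mem_iUnion, Set.mem_setOf_eq]
        refine ⟨_, Finset.mem_sdiff.2 ⟨hpmem, hpnot⟩, ?_⟩
        intro n hn3 hnK'
        rw [if_pos (⟨hn3, hnK'⟩ : 3 ≤ n ∧ n ≤ K)]
      have hbad : μ Aᶜ ≤ ENNReal.ofReal (1 - QQ f K) := by
        refine le_trans (measure_mono hsub) ?_
        refine le_trans (measure_biUnion_finset_le _ _) ?_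
        have heach : ∀ p ∈ PP 1 K \ PP 2 K,
            μ {ω | ∀ n : ℕ, 3 ≤ n → n ≤ K → parent n ω = p n}
              = ENNReal.ofReal (Wt f p K) := by
          intro p hp
          have hval := ((mem_PP K p).1 (Finset.mem_sdiff.1 hp).1).1
          exact hLaw K hK3 p (fun n h3 hnK => hval n h3 hnK)
        rw [Finset.sum_congr rfl heach,
          ← ENNReal.ofReal_sum_of_nonneg (fun p _ => (Wt_pos f hfpos p K).le),
          Finset.sum_sdiff_eq_sub PP_subset, Z_one f hfpos K hK]
        exact le_rfl
      have h1le : (1:ENNReal) ≤ μ A + μ Aᶜ := by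
        rw [← measure_univ (μ := μ), ← Set.union_compl_self A]
        exact measure_union_le _ _
      have hQle1 := QQ_le_one f hfpos hK
      have hQ0 := (QQ_pos f hfpos K).le
      have hkey : ENNReal.ofReal (QQ f K) + ENNReal.ofReal (1 - QQ f K) = 1 := by
        rw [← ENNReal.ofReal_add hQ0 (by linarith)]
        norm_num
      calc ENNReal.ofReal (QQ f K) = 1 - ENNReal.ofReal (1 - QQ f K) :=
            ENNReal.eq_sub_of_add_eq ENNReal.ofReal_ne_top hkey
        _ ≤ 1 - μ Aᶜ := tsub_le_tsub_left hbad 1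
        _ ≤ μ A := tsub_le_iff_right.2 h1le
  -- abbreviations
  set D : ℝ := 2*C + β with hDdef
  set α : ℝ := f 1 / D with hadef
  have hα : 0 < α := div_pos hf1 hD
  set γ : ℝ := C / D with hgdef
  have hγ0 : 0 < γ := div_pos hC hD
  have hγ1 : γ < 1 := by
    rw [hgdef, div_lt_one hD, hDdef]
    linarith
  have hDγ : D * γ = C := by
    rw [hgdef]
    field_simp
  set s : ℝ := α + γ + 3 with hsdef
  have hs3 : 3 < s := by rw [hsdef]; linarith
  set N : ℕ := ⌈s⌉₊ + 1 with hNdef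
  have hsN : s < N := by
    have h := Nat.le_ceil s
    have : ((⌈s⌉₊ : ℕ) : ℝ) < ((N:ℕ) : ℝ) := by
      rw [hNdef]
      push_cast
      linarith
    linarith
  have hN4 : 4 ≤ N := by
    have h3N : (3:ℝ) < (N:ℝ) := lt_trans hs3 hsN
    have : 3 < N := by exact_mod_cast h3N
    omega
  -- one-step recursion
  have hrec : ∀ K : ℕ, 2 ≤ K → QQ f K * (1 - f 1 / (D * ((K:ℝ) - 1) - C)) ≤ QQ f (K+1) := by
    intro K hK
    rw [QQ_succ f hK]
    have hK2R : (2:ℝ) ≤ (K:ℝ) := by exact_mod_cast hK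
    have hL : 0 < D * ((K:ℝ)-1) - C := by
      have h1 : D * 1 ≤ D * ((K:ℝ)-1) := by
        apply mul_le_mul_of_nonneg_left (by linarith) hD.le
      rw [hDdef] at h1 ⊢
      linarith
    unfold QQ
    rw [Finset.sum_mul]
    refine Finset.sum_le_sum fun p hp => ?_
    have hSpos := Sw_pos f hfpos (by omega : 1 ≤ K) p
    have hSge : D * ((K:ℝ)-1) - C ≤ Sw f p K := by
      have hval := ((mem_PP K p).1 (PP_subset hp)).1
      have hw := hweight K hK (treeDeg p K) (fun j _ _ => one_le_treeDeg p K j)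
        (sum_treeDeg hK (fun m h3 hm => by
          have := hval m h3 hm
          omega))
      exact hw
    have hfrac : 1 - f 1 / (D*((K:ℝ)-1) - C) ≤ (Sw f p K - f 1)/Sw f p K := by
      rw [sub_div, div_self (ne_of_gt hSpos)]
      have : f 1 / Sw f p K ≤ f 1 / (D*((K:ℝ)-1)-C) :=
        div_le_div_of_nonneg_left hf1.le hL hSge
      linarith
    exact mul_le_mul_of_nonneg_left hfrac (Wt_pos f hfpos p K).le
  -- induction: polynomial lower bound for QQ
  set E : ℝ := QQ f N * ((N:ℝ) + 1 - s) ^ α with hEdef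
  have hNs1 : (1:ℝ) < (N:ℝ) + 1 - s := by linarith
  have hE : 0 < E := mul_pos (QQ_pos f hfpos N) (Real.rpow_pos_of_pos (by linarith) α)
  have hclaim : ∀ K : ℕ, N ≤ K → E / ((K:ℝ) + 1 - s) ^ α ≤ QQ f K := by
    refine Nat.le_induction ?_ ?_
    · rw [hEdef, mul_div_assoc,
        div_self (ne_of_gt (Real.rpow_pos_of_pos (by linarith) α)), mul_one]
    · intro K hNK ih
      have hKR : (N:ℝ) ≤ (K:ℝ) := by exact_mod_cast hNK
      set t : ℝ := (K:ℝ) + 2 - s with htdef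
      have ht1 : 1 < t := by rw [htdef]; linarith
      have hta : t + α = (K:ℝ) - 1 - γ := by rw [htdef, hsdef]; ring
      have hfr : f 1 / (D * ((K:ℝ)-1) - C) = α / (t + α) := by
        have hx : D * ((K:ℝ)-1) - C = D * ((K:ℝ) - 1 - γ) := by
          rw [← hDγ]; ring
        rw [hta, hx, hadef, ← div_div]
      have hstep := hrec K (by omega)
      rw [hfr] at hstep
      have hkr := key_ratio hα ht1
      have htm1 : t - 1 = (K:ℝ) + 1 - s := by rw [htdef]; ring
      have ih' : E / (t-1) ^ α ≤ QQ f K := by rw [htm1]; exact ih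
      have hcast : ((K:ℕ):ℝ) + 1 + 1 - s = t := by rw [htdef]; ring
      have hp1 : (0:ℝ) < (t-1) ^ α := Real.rpow_pos_of_pos (by linarith) _
      have hp2 : (0:ℝ) < t ^ α := Real.rpow_pos_of_pos (by linarith) _
      have hsplit : E / t ^ α = (E / (t-1) ^ α) * (((t-1)/t) ^ α) := by
        rw [Real.div_rpow (by linarith : (0:ℝ) ≤ t - 1) (by linarith : (0:ℝ) ≤ t)]
        field_simp
      push_cast
      rw [hcast, hsplit]
      calc (E / (t-1)^α) * ((t-1)/t)^α
          ≤ QQ f K * (1 - α/(t+α)) :=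
            mul_le_mul ih' hkr
              (Real.rpow_nonneg (div_nonneg (by linarith) (by linarith)) α)
              (QQ_pos f hfpos K).le
        _ ≤ QQ f (K+1) := hstep
  have hfinal : ∀ K : ℕ, N ≤ K → E / (K:ℝ) ^ α ≤ QQ f K := by
    intro K hNK
    refine le_trans ?_ (hclaim K hNK)
    have hKR : (N:ℝ) ≤ (K:ℝ) := by exact_mod_cast hNK
    have h0 : (0:ℝ) < (K:ℝ) + 1 - s := by linarith
    have h1 : (K:ℝ) + 1 - s ≤ (K:ℝ) := by linarith
    exact div_le_div_of_nonneg_left hE.le (Real.rpow_pos_of_pos h0 α)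
      (Real.rpow_le_rpow h0.le h1 hα.le)
  -- choose the constant
  have hNicc : (Finset.Icc 2 N).Nonempty := ⟨2, Finset.mem_Icc.2 ⟨le_rfl, by omega⟩⟩
  have hc : 0 < (Finset.Icc 2 N).inf' hNicc (QQ f) :=
    (Finset.lt_inf'_iff hNicc).2 fun k _ => QQ_pos f hfpos k
  refine ⟨min E ((Finset.Icc 2 N).inf' hNicc (QQ f)), lt_min hE hc, ?_⟩
  intro K hK2
  have hKpos : (0:ℝ) < (K:ℝ) := by positivity
  have hQK : min E ((Finset.Icc 2 N).inf' hNicc (QQ f)) / (K:ℝ) ^ α ≤ QQ f K := by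
    rcases le_or_gt N K with h | h
    · refine le_trans ?_ (hfinal K h)
      have hKpos' : (0:ℝ) < (K:ℝ) := by
        have : (0:ℕ) < K := by omega
        exact_mod_cast this
      exact (div_le_div_iff_of_pos_right (Real.rpow_pos_of_pos hKpos' α)).2 (min_le_left _ _)
    · have hKN : K ∈ Finset.Icc 2 N := Finset.mem_Icc.2 ⟨hK2, by omega⟩
      have h1 : min E ((Finset.Icc 2 N).inf' hNicc (QQ f)) ≤ QQ f K :=
        le_trans (min_le_right _ _) (Finset.inf'_le _ hKN)
      have hK1 : (1:ℝ) ≤ (K:ℝ) := by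
        have : (1:ℕ) ≤ K := by omega
        exact_mod_cast this
      have hKpow : (1:ℝ) ≤ (K:ℝ) ^ α := by
        calc (1:ℝ) = (K:ℝ) ^ (0:ℝ) := (Real.rpow_zero _).symm
          _ ≤ (K:ℝ) ^ α := Real.rpow_le_rpow_of_exponent_le hK1 hα.le
      have hmin0 : 0 ≤ min E ((Finset.Icc 2 N).inf' hNicc (QQ f)) :=
        le_min hE.le hc.le
      calc min E ((Finset.Icc 2 N).inf' hNicc (QQ f)) / (K:ℝ)^α
          ≤ min E ((Finset.Icc 2 N).inf' hNicc (QQ f)) / 1 :=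
            div_le_div_of_nonneg_left hmin0 zero_lt_one hKpow
        _ = min E ((Finset.Icc 2 N).inf' hNicc (QQ f)) := div_one _
        _ ≤ QQ f K := h1
  exact le_trans (ENNReal.ofReal_le_ofReal hQK) (hmu K hK2)
end
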